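/- arXiv:2012.01482 — 5 statements merged into one kernel-verified Lean document; each statement's English description precedes it below -/
import Mathlib

section
/- Let G and H be finite groups. If the commuting graph of G is isomorphic (as a simple graph) to the commuting graph of H, then Γ(G) = Γ(H); that is, the primes dividing |G| coincide with the primes dividing |H|, and for all distinct primes p and q, G contains an element of order pq if and only if H does. -/
/-!
Maximal cliques of a commuting graph are the maximal abelian subgroups: each one is its own
centralizer. A graph isomorphism therefore matches maximal abelian subgroups of equal orders.
An element of order `p * q` lies in a maximal abelian subgroup, whose order `p * q` divides;
conversely Cauchy's theorem gives, in an abelian group of order divisible by `p * q`, elements of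
orders `p` and `q`, whose product has order `p * q`. The prime divisors agree since `|G| = |H|`.
-/

/-- Two finite groups have the same Gruenberg–Kegel graph. -/
def gkEq (G : Type) [Group G] [Fintype G] (H : Type) [Group H] [Fintype H] : Prop :=
  (∀ p : ℕ, p.Prime → (p ∣ Fintype.card G ↔ p ∣ Fintype.card H)) ∧
  ∀ p q : ℕ, p.Prime → q.Prime → p ≠ q →
    ((∃ g : G, orderOf g = p * q) ↔ (∃ h : H, orderOf h = p * q))

/-- The commuting graph of a group: distinct elements are adjacent iff they commute. -/
def commutingGraph (G : Type) [Group G] : SimpleGraph G where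
  Adj a b := a ≠ b ∧ a * b = b * a
  symm := ⟨fun _ _ h => ⟨h.1.symm, h.2.symm⟩⟩
  loopless := ⟨fun _ h => h.1 rfl⟩

namespace SimpleGraph.Iso

variable {V W : Type*} {G : SimpleGraph V} {H : SimpleGraph W}

theorem isClique_image_iff (f : G ≃g H) {s : Set V} : H.IsClique (f '' s) ↔ G.IsClique s := by
  have hadj : Function.onFun H.Adj f = G.Adj := funext₂ fun _ _ => propext f.map_adj_iff
  rw [IsClique, f.injective.injOn.pairwise_image, hadj, IsClique]

theorem maximal_isClique_image (f : G ≃g H) {s : Set V} (hs : Maximal G.IsClique s) :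
    Maximal H.IsClique (f '' s) := by
  refine ⟨f.isClique_image_iff.2 hs.1, fun t ht hst => ?_⟩
  have hpre : G.IsClique (f.symm '' t) := f.symm.isClique_image_iff.2 ht
  have hsub : s ⊆ f.symm '' t := by
    rw [← f.toEquiv.symm_image_image s]
    exact Set.image_mono hst
  rw [← f.toEquiv.image_symm_image t]
  exact Set.image_mono (hs.2 hpre hsub)

theorem exists_maximal_isClique_dvd_card_iff (f : G ≃g H) (n : ℕ) :
    (∃ s, Maximal G.IsClique s ∧ n ∣ Nat.card s) ↔
      ∃ t, Maximal H.IsClique t ∧ n ∣ Nat.card t := by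
  constructor
  · rintro ⟨s, hs, hn⟩
    exact ⟨f '' s, f.maximal_isClique_image hs,
      by rwa [Nat.card_image_of_injective f.injective]⟩
  · rintro ⟨t, ht, hn⟩
    exact ⟨f.symm '' t, f.symm.maximal_isClique_image ht,
      by rwa [Nat.card_image_of_injective f.symm.injective]⟩

end SimpleGraph.Iso

theorem exists_orderOf_eq_prime_mul_prime {K : Type*} [CommGroup K] [Finite K] {p q : ℕ}
    (hp : p.Prime) (hq : q.Prime) (hpq : p ≠ q) (hdvd : p * q ∣ Nat.card K) :
    ∃ k : K, orderOf k = p * q := by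
  have := Fact.mk hp
  have := Fact.mk hq
  obtain ⟨a, ha⟩ := exists_prime_orderOf_dvd_card' p (dvd_of_mul_right_dvd hdvd)
  obtain ⟨b, hb⟩ := exists_prime_orderOf_dvd_card' q (dvd_of_mul_left_dvd hdvd)
  refine ⟨a * b, ?_⟩
  rw [(Commute.all a b).orderOf_mul_eq_mul_orderOf_of_coprime, ha, hb]
  rwa [ha, hb, Nat.coprime_primes hp hq]

namespace commutingGraph

variable {G : Type} [Group G] {s : Set G}

theorem isClique_iff : (commutingGraph G).IsClique s ↔ s ⊆ Set.centralizer s := by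
  refine ⟨fun hs a ha b hb => ?_, fun hs a ha b hb hab => ⟨hab, (hs ha b hb).symm⟩⟩
  rcases eq_or_ne b a with rfl | hba
  · rfl
  · exact (hs hb ha hba).2

theorem coe_centralizer_eq_of_maximal (hs : Maximal (commutingGraph G).IsClique s) :
    (Subgroup.centralizer s : Set G) = s := by
  refine subset_antisymm (fun x hx => ?_) (isClique_iff.1 hs.1)
  have hins : (commutingGraph G).IsClique (insert x s) :=
    hs.1.insert fun b hb hxb => ⟨hxb, (hx b hb).symm⟩
  exact hs.2 hins (Set.subset_insert x s) (Set.mem_insert x s)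

theorem isMulCommutative_centralizer_of_maximal (hs : Maximal (commutingGraph G).IsClique s) :
    IsMulCommutative (Subgroup.centralizer s) := by
  rw [← Subgroup.le_centralizer_iff_isMulCommutative, ← SetLike.coe_subset_coe,
    coe_centralizer_eq_of_maximal hs]
  exact isClique_iff.1 hs.1

open scoped IsMulCommutative in
theorem exists_orderOf_eq_prime_mul_prime_iff [Finite G] {p q : ℕ}
    (hp : p.Prime) (hq : q.Prime) (hpq : p ≠ q) :
    (∃ g : G, orderOf g = p * q) ↔
      ∃ s, Maximal (commutingGraph G).IsClique s ∧ p * q ∣ Nat.card s := by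
  constructor
  · rintro ⟨g, hg⟩
    have hpowers : (commutingGraph G).IsClique (Subgroup.zpowers g : Set G) :=
      isClique_iff.2 (Subgroup.le_centralizer (Subgroup.zpowers g))
    obtain ⟨s, hgs, hs⟩ := Finite.exists_le_maximal hpowers
    have hK := coe_centralizer_eq_of_maximal hs
    refine ⟨s, hs, hg ▸ ?_⟩
    rw [← hK, SetLike.coe_sort_coe]
    refine Subgroup.orderOf_dvd_natCard _ ?_
    rw [← SetLike.mem_coe, hK]
    exact hgs (Subgroup.mem_zpowers g)
  · rintro ⟨s, hs, hdvd⟩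
    have := isMulCommutative_centralizer_of_maximal hs
    obtain ⟨k, hk⟩ := exists_orderOf_eq_prime_mul_prime hp hq hpq (K := Subgroup.centralizer s)
      (by rwa [← SetLike.coe_sort_coe, coe_centralizer_eq_of_maximal hs])
    exact ⟨k, (Subgroup.orderOf_coe k).trans hk⟩

end commutingGraph

/-- If the commuting graphs of two finite groups are isomorphic, then the groups have
the same Gruenberg–Kegel graph. -/
theorem gkEq_of_commutingGraph_iso
    (G : Type) [Group G] [Fintype G] (H : Type) [Group H] [Fintype H]
    (h : Nonempty (commutingGraph G ≃g commutingGraph H)) :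
    gkEq G H := by
  obtain ⟨f⟩ := h
  refine ⟨fun p _ => by rw [Fintype.card_congr f.toEquiv], fun p q hp hq hpq => ?_⟩
  rw [commutingGraph.exists_orderOf_eq_prime_mul_prime_iff hp hq hpq,
    commutingGraph.exists_orderOf_eq_prime_mul_prime_iff hp hq hpq]
  exact f.exists_maximal_isClique_dvd_card_iff (p * q)
end

section
/- Let G and H be finite groups. If the enhanced power graph of G is isomorphic (as a simple graph) to the enhanced power graph of H, then Γ(G) = Γ(H); that is, the primes dividing |G| coincide with the primes dividing |H|, and for all distinct primes p and q, G contains an element of order pq if and only if H does. -/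
/-- The enhanced power graph of a group: distinct elements are adjacent iff together
they generate a cyclic subgroup. -/
def enhancedPowerGraph (G : Type) [Group G] : SimpleGraph G where
  Adj a b := a ≠ b ∧ IsCyclic (Subgroup.closure {a, b} : Subgroup G)
  symm := by
    constructor
    intro a b h
    refine ⟨h.1.symm, ?_⟩
    rw [Set.pair_comm b a]
    exact h.2
  loopless := ⟨fun _ h => h.1 rfl⟩

/-!
In the enhanced power graph of a finite group, the vertices whose closed neighbourhood contains
that of `x` are exactly the elements lying in every maximal cyclic subgroup through `x`, so they
form a cyclic subgroup containing `x`. The size of this set is a graph invariant of `x`, and the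
element orders of the group are precisely the divisors of these sizes. Hence groups with isomorphic
enhanced power graphs have the same element orders (and the same order).
-/

namespace SimpleGraph

variable {V W : Type*} {Γ : SimpleGraph V} {Γ' : SimpleGraph W}

def closedNeighborSet (Γ : SimpleGraph V) (x : V) : Set V := insert x (Γ.neighborSet x)

def dominators (Γ : SimpleGraph V) (x : V) : Set V :=
  {y | Γ.closedNeighborSet x ⊆ Γ.closedNeighborSet y}

lemma mem_dominators_self {x : V} : x ∈ Γ.dominators x := Set.Subset.rfl

lemma Iso.preimage_closedNeighborSet (φ : Γ ≃g Γ') (x : V) :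
    φ ⁻¹' Γ'.closedNeighborSet (φ x) = Γ.closedNeighborSet x := by
  ext z
  simp only [closedNeighborSet, Set.mem_preimage, Set.mem_insert_iff, mem_neighborSet,
    φ.injective.eq_iff, φ.map_adj_iff]

lemma Iso.map_mem_dominators_iff (φ : Γ ≃g Γ') {x y : V} :
    φ y ∈ Γ'.dominators (φ x) ↔ y ∈ Γ.dominators x := by
  rw [dominators, dominators, Set.mem_ofPred_eq, Set.mem_ofPred_eq, ← φ.toEquiv.preimage_subset]
  exact Iff.of_eq (congrArg₂ _ (φ.preimage_closedNeighborSet x) (φ.preimage_closedNeighborSet y))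

lemma Iso.card_dominators (φ : Γ ≃g Γ') (x : V) :
    Nat.card (Γ'.dominators (φ x)) = Nat.card (Γ.dominators x) :=
  (Nat.card_congr (φ.toEquiv.subtypeEquiv fun _ => φ.map_mem_dominators_iff.symm)).symm

lemma Iso.exists_dvd_card_dominators_iff (φ : Γ ≃g Γ') (n : ℕ) :
    (∃ x, n ∣ Nat.card (Γ.dominators x)) ↔ ∃ y, n ∣ Nat.card (Γ'.dominators y) := by
  rw [← φ.toEquiv.exists_congr_right]
  simp [φ.card_dominators]

end SimpleGraph

open Subgroup SimpleGraph

section EnhancedPowerGraph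

variable {G : Type} [Group G]

lemma isCyclic_closure_pair_of_mem {M : Subgroup G} [IsCyclic M] {x z : G} (hx : x ∈ M)
    (hz : z ∈ M) : IsCyclic (closure {x, z}) :=
  isCyclic_of_le ((closure_le M).mpr (Set.insert_subset hx (Set.singleton_subset_iff.mpr hz)))

lemma mem_closedNeighborSet_enhancedPowerGraph {x z : G} :
    z ∈ (enhancedPowerGraph G).closedNeighborSet x ↔ IsCyclic (closure {x, z}) := by
  refine ⟨?_, fun h => (eq_or_ne z x).imp id fun hzx => ⟨hzx.symm, h⟩⟩
  rintro (rfl | h)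
  · exact isCyclic_closure_pair_of_mem (mem_zpowers z) (mem_zpowers z)
  · exact h.2

variable [Finite G]

lemma mem_dominators_enhancedPowerGraph_iff {x y : G} :
    y ∈ (enhancedPowerGraph G).dominators x ↔
      ∀ M : Subgroup G, Maximal (fun N : Subgroup G => IsCyclic N) M → x ∈ M → y ∈ M := by
  simp only [dominators, Set.mem_ofPred_eq, Set.subset_def,
    mem_closedNeighborSet_enhancedPowerGraph]
  constructor
  · intro hy M hM hxM
    obtain ⟨m, rfl⟩ := (M.isCyclic_iff_exists_zpowers_eq_top).mp hM.1
    have hcyc := hy m (isCyclic_closure_pair_of_mem hxM (mem_zpowers m))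
    have hle : zpowers m ≤ closure {y, m} := zpowers_le.mpr (subset_closure (by simp))
    exact hM.2 hcyc hle (subset_closure (by simp))
  · intro hy z hz
    obtain ⟨M, hle, hM⟩ := Finite.exists_le_maximal (p := fun N : Subgroup G => IsCyclic N) hz
    have : IsCyclic M := hM.1
    exact isCyclic_closure_pair_of_mem (hy M hM (hle (subset_closure (by simp))))
      (hle (subset_closure (by simp)))

lemma exists_zpowers_eq_dominators_enhancedPowerGraph (x : G) :
    ∃ m : G, (zpowers m : Set G) = (enhancedPowerGraph G).dominators x := by
  let core := sInf {M : Subgroup G | Maximal (fun N : Subgroup G => IsCyclic N) M ∧ x ∈ M}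
  obtain ⟨M, hxM, hM⟩ :=
    Finite.exists_le_maximal (p := fun N : Subgroup G => IsCyclic N) (isCyclic_zpowers x)
  have : IsCyclic M := hM.1
  have : IsCyclic core := isCyclic_of_le (sInf_le ⟨hM, hxM (mem_zpowers x)⟩)
  obtain ⟨m, hm⟩ := core.isCyclic_iff_exists_zpowers_eq_top.mp this
  refine ⟨m, Set.ext fun y => ?_⟩
  rw [SetLike.mem_coe, hm, mem_sInf, mem_dominators_enhancedPowerGraph_iff]
  exact ⟨fun h M hM hxM => h M ⟨hM, hxM⟩, fun h M hM => h M hM.1 hM.2⟩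

lemma exists_orderOf_eq_iff_exists_dvd_card_dominators (n : ℕ) :
    (∃ g : G, orderOf g = n) ↔ ∃ x, n ∣ Nat.card ((enhancedPowerGraph G).dominators x) := by
  constructor
  · rintro ⟨g, rfl⟩
    obtain ⟨m, hm⟩ := exists_zpowers_eq_dominators_enhancedPowerGraph g
    have hg : g ∈ (zpowers m : Set G) := hm ▸ mem_dominators_self
    refine ⟨g, ?_⟩
    rw [← hm, SetLike.coe_sort_coe, Nat.card_zpowers]
    exact orderOf_dvd_of_mem_zpowers hg
  · rintro ⟨x, hn⟩
    obtain ⟨m, hm⟩ := exists_zpowers_eq_dominators_enhancedPowerGraph x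
    rw [← hm, SetLike.coe_sort_coe, Nat.card_zpowers] at hn
    exact ⟨_, orderOf_pow_orderOf_div (orderOf_pos m).ne' hn⟩

end EnhancedPowerGraph

lemma exists_orderOf_eq_iff_of_enhancedPowerGraph_iso {G H : Type} [Group G] [Finite G]
    [Group H] [Finite H] (φ : enhancedPowerGraph G ≃g enhancedPowerGraph H) (n : ℕ) :
    (∃ g : G, orderOf g = n) ↔ ∃ h : H, orderOf h = n := by
  rw [exists_orderOf_eq_iff_exists_dvd_card_dominators,
    exists_orderOf_eq_iff_exists_dvd_card_dominators]
  exact φ.exists_dvd_card_dominators_iff n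

/-- If the enhanced power graphs of two finite groups are isomorphic, then the groups
have the same Gruenberg–Kegel graph. -/
theorem gkEq_of_enhancedPowerGraph_iso
    (G : Type) [Group G] [Fintype G] (H : Type) [Group H] [Fintype H]
    (h : Nonempty (enhancedPowerGraph G ≃g enhancedPowerGraph H)) :
    gkEq G H := by
  obtain ⟨φ⟩ := h
  refine ⟨fun p _ => by rw [Fintype.card_congr φ.toEquiv], fun p q _ _ _ => ?_⟩
  exact exists_orderOf_eq_iff_of_enhancedPowerGraph_iso φ (p * q)
end

section
/- Let G be a finite group. The enhanced power graph of G is equal to the power graph of G (the two graphs on vertex set G have the same edges) if and only if there do not exist distinct primes p and q such that G contains an element of order pq. -/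
/-- The power graph of a group: distinct elements are adjacent iff one is a power of
the other. -/
def powerGraph (G : Type) [Group G] : SimpleGraph G where
  Adj a b := a ≠ b ∧ (a ∈ Subgroup.zpowers b ∨ b ∈ Subgroup.zpowers a)
  symm := ⟨fun _ _ h => ⟨h.1.symm, h.2.symm⟩⟩
  loopless := ⟨fun _ h => h.1 rfl⟩

/-!
When `G` has no element of order `pq` for distinct primes `p` and `q`, every element order is a
prime power. If `a` and `b` both lie in a cyclic subgroup `⟨c⟩`, their orders then divide a power
of one prime and so one divides the other; since a finite cyclic group has at most `n` solutions of
`x ^ n = 1`, the element of smaller order is a power of the other. Conversely, if `g` has order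
`pq`, then `g ^ p` and `g ^ q` generate a cyclic group, but neither is a power of the other
because their orders `q` and `p` are coprime.
-/

open Subgroup

section
variable {G : Type*} [Group G]

theorem isCyclic_closure_pair_iff {a b : G} :
    IsCyclic (closure {a, b} : Subgroup G) ↔ ∃ c : G, a ∈ zpowers c ∧ b ∈ zpowers c := by
  constructor
  · intro h
    obtain ⟨c, hc⟩ := (Subgroup.isCyclic_iff_exists_zpowers_eq_top _).mp h
    exact ⟨c, hc ▸ subset_closure (by simp), hc ▸ subset_closure (by simp)⟩
  · rintro ⟨c, ha, hb⟩
    exact isCyclic_of_le ((closure_le _).mpr (Set.pair_subset ha hb))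

theorem IsCyclic.mem_zpowers_of_orderOf_dvd [Finite G] [IsCyclic G] {x y : G}
    (h : orderOf x ∣ orderOf y) : x ∈ zpowers y := by
  classical
  have := Fintype.ofFinite G
  have hsub : (zpowers y : Set G).toFinset ⊆ ({z | z ^ orderOf y = 1} : Finset G) :=
    fun z hz => by
      rw [Set.mem_toFinset, SetLike.mem_coe] at hz
      simpa [orderOf_dvd_iff_pow_eq_one] using orderOf_dvd_of_mem_zpowers hz
  have hcard : ({z | z ^ orderOf y = 1} : Finset G).card ≤ (zpowers y : Set G).toFinset.card := by
    rw [Set.toFinset_card, ← Nat.card_eq_fintype_card, SetLike.coe_sort_coe, Nat.card_zpowers]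
    exact IsCyclic.card_pow_eq_one_le (orderOf_pos y)
  rw [← SetLike.mem_coe, ← Set.mem_toFinset, Finset.eq_of_subset_of_card_le hsub hcard]
  simpa [orderOf_dvd_iff_pow_eq_one] using h

theorem IsOfFinOrder.mem_zpowers_of_orderOf_dvd {a b c : G} (hc : IsOfFinOrder c)
    (ha : a ∈ zpowers c) (hb : b ∈ zpowers c) (h : orderOf a ∣ orderOf b) : a ∈ zpowers b := by
  have := (finite_zpowers.mpr hc).to_subtype
  obtain ⟨k, hk⟩ := mem_zpowers_iff.mp <|
    IsCyclic.mem_zpowers_of_orderOf_dvd (x := (⟨a, ha⟩ : zpowers c)) (y := ⟨b, hb⟩)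
      (by simpa only [orderOf_mk] using h)
  exact ⟨k, congrArg Subtype.val hk⟩

theorem mem_zpowers_or_mem_zpowers_of_orderOf_eq_prime_pow {a b c : G} {p k : ℕ}
    (hp : p.Prime) (hc : orderOf c = p ^ k) (ha : a ∈ zpowers c) (hb : b ∈ zpowers c) :
    a ∈ zpowers b ∨ b ∈ zpowers a := by
  have hfin : IsOfFinOrder c := orderOf_pos_iff.mp (hc ▸ pow_pos hp.pos k)
  obtain ⟨i, -, hi⟩ := (Nat.dvd_prime_pow hp).mp (hc ▸ orderOf_dvd_of_mem_zpowers ha)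
  obtain ⟨j, -, hj⟩ := (Nat.dvd_prime_pow hp).mp (hc ▸ orderOf_dvd_of_mem_zpowers hb)
  rcases le_total i j with hij | hji
  · exact .inl <| hfin.mem_zpowers_of_orderOf_dvd ha hb (hi ▸ hj ▸ pow_dvd_pow p hij)
  · exact .inr <| hfin.mem_zpowers_of_orderOf_dvd hb ha (hi ▸ hj ▸ pow_dvd_pow p hji)

theorem exists_orderOf_eq_prime_pow
    (hG : ¬ ∃ p q : ℕ, p.Prime ∧ q.Prime ∧ p ≠ q ∧ ∃ g : G, orderOf g = p * q)
    {g : G} (hg : IsOfFinOrder g) : ∃ p k : ℕ, p.Prime ∧ orderOf g = p ^ k := by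
  rcases eq_or_ne (orderOf g) 1 with h1 | h1
  · exact ⟨2, 0, Nat.prime_two, h1⟩
  have hp := Nat.minFac_prime h1
  refine ⟨_, _, hp, Nat.eq_prime_pow_of_unique_prime_dvd hg.orderOf_pos.ne' fun hq hqg => ?_⟩
  by_contra hne
  have hpq : (orderOf g).minFac * _ ∣ orderOf g :=
    ((Nat.coprime_primes hp hq).mpr (Ne.symm hne)).mul_dvd_of_dvd_of_dvd (Nat.minFac_dvd _) hqg
  exact hG ⟨_, _, hp, hq, Ne.symm hne, _, orderOf_pow_orderOf_div hg.orderOf_pos.ne' hpq⟩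

end

theorem enhancedPowerGraph_adj_and_not_powerGraph_adj {G : Type} [Group G] {p q : ℕ}
    (hp : p.Prime) (hq : q.Prime) (hpq : p ≠ q) {g : G} (hg : orderOf g = p * q) :
    (enhancedPowerGraph G).Adj (g ^ p) (g ^ q) ∧ ¬ (powerGraph G).Adj (g ^ p) (g ^ q) := by
  have hgp : orderOf (g ^ p) = q := by
    rw [orderOf_pow_of_dvd hp.ne_zero (hg ▸ dvd_mul_right p q), hg,
      Nat.mul_div_cancel_left q hp.pos]
  have hgq : orderOf (g ^ q) = p := by
    rw [orderOf_pow_of_dvd hq.ne_zero (hg ▸ dvd_mul_left q p), hg, Nat.mul_div_cancel p hq.pos]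
  refine ⟨⟨fun h => hpq (hgq ▸ hgp ▸ congrArg orderOf h).symm,
    isCyclic_closure_pair_iff.mpr ⟨g, npow_mem_zpowers g p, npow_mem_zpowers g q⟩⟩, ?_⟩
  rintro ⟨-, h | h⟩ <;> have hdvd := orderOf_dvd_of_mem_zpowers h <;> rw [hgp, hgq] at hdvd
  · exact hpq ((Nat.prime_dvd_prime_iff_eq hq hp).mp hdvd).symm
  · exact hpq ((Nat.prime_dvd_prime_iff_eq hp hq).mp hdvd)

/-- The enhanced power graph of a finite group `G` equals the power graph of `G` if and
only if the Gruenberg–Kegel graph of `G` has no edges, i.e. `G` has no element whose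
order is the product of two distinct primes. -/
theorem enhancedPowerGraph_eq_powerGraph_iff
    (G : Type) [Group G] [Fintype G] :
    enhancedPowerGraph G = powerGraph G ↔
      ¬ ∃ p q : ℕ, p.Prime ∧ q.Prime ∧ p ≠ q ∧ ∃ g : G, orderOf g = p * q := by
  constructor
  · rintro hEq ⟨p, q, hp, hq, hpq, g, hg⟩
    obtain ⟨hadj, hnadj⟩ := enhancedPowerGraph_adj_and_not_powerGraph_adj hp hq hpq hg
    exact hnadj (hEq ▸ hadj)
  · intro hG
    ext a b
    refine and_congr_right fun _ => isCyclic_closure_pair_iff.trans ⟨?_, ?_⟩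
    · rintro ⟨c, ha, hb⟩
      obtain ⟨p, k, hp, hc⟩ := exists_orderOf_eq_prime_pow hG (isOfFinOrder_of_finite c)
      exact mem_zpowers_or_mem_zpowers_of_orderOf_eq_prime_pow hp hc ha hb
    · rintro (h | h)
      · exact ⟨b, h, mem_zpowers b⟩
      · exact ⟨a, mem_zpowers a, h⟩
end

section
/- Let G be a finite group with a cyclic normal subgroup C such that the quotient G/C can be generated by k elements. Then the number of subgroups H of G with HC = G (supplements of C in G) is at most |C|^{k+1}. -/
/-!
Fix generators `g₁, …, gₖ` of `G / C` and a supplement `H`. Since `C` is cyclic, so is `H ∩ C`,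
say generated by `c`; and `H` contains lifts `hᵢ = out(gᵢ) * vᵢ` of the `gᵢ` with `vᵢ ∈ C`. The
subgroup `K` generated by `c` and the `hᵢ` lies in `H`, still supplements `C`, and contains
`H ∩ C`, so `K = H` by the modular law. Hence `H` is determined by `(c, v₁, …, vₖ) ∈ C ^ (k + 1)`.
-/

namespace Subgroup

variable {G : Type*} [Group G]

theorem sup_eq_top_iff_map_mk'_eq_top (H N : Subgroup G) [N.Normal] :
    H ⊔ N = ⊤ ↔ H.map (QuotientGroup.mk' N) = ⊤ := by
  have hsurj := QuotientGroup.mk'_surjective N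
  rw [← (comap_injective hsurj).eq_iff, comap_map_eq, QuotientGroup.ker_mk', comap_top]

theorem eq_of_le_of_sup_eq_top_of_inf_le {H K N : Subgroup G} [N.Normal] (hKH : K ≤ H)
    (hKN : K ⊔ N = ⊤) (hHN : H ⊓ N ≤ K) : K = H := by
  refine le_antisymm hKH fun x hx => ?_
  obtain ⟨y, hy, z, hz, rfl⟩ := mem_sup_of_normal_right.mp (hKN ▸ mem_top x)
  have hzH : z ∈ H := by simpa using H.mul_mem (H.inv_mem (hKH hy)) hx
  exact K.mul_mem hy (hHN ⟨hzH, hz⟩)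

theorem exists_zpowers_eq_inf_of_isCyclic (H : Subgroup G) {N : Subgroup G} [IsCyclic N] :
    ∃ c ∈ N, zpowers c = H ⊓ N := by
  obtain ⟨c, hc⟩ := (H ⊓ N).isCyclic_iff_exists_zpowers_eq_top.mp (isCyclic_of_le inf_le_right)
  exact ⟨c, (hc ▸ mem_zpowers c : c ∈ H ⊓ N).2, hc⟩

variable (N : Subgroup G) [N.Normal] {ι : Type*}

def closureOfLifts (g : ι → G ⧸ N) (p : N × (ι → N)) : Subgroup G :=
  closure (insert (p.1 : G) (Set.range fun i => (g i).out * (p.2 i : G)))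

variable {N}

theorem exists_closureOfLifts_eq [IsCyclic N] {g : ι → G ⧸ N}
    (hg : closure (Set.range g) = ⊤) {H : Subgroup G} (hH : H ⊔ N = ⊤) :
    ∃ p, closureOfLifts N g p = H := by
  obtain ⟨c, hcN, hc⟩ := H.exists_zpowers_eq_inf_of_isCyclic (N := N)
  have hlift : ∀ i, ∃ h ∈ H, QuotientGroup.mk' N h = g i := fun i => by
    rw [← mem_map, (sup_eq_top_iff_map_mk'_eq_top H N).mp hH]
    exact mem_top _
  choose h hhH hhg using hlift
  have hvN : ∀ i, (g i).out⁻¹ * h i ∈ N := fun i => by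
    rw [← QuotientGroup.eq]
    simpa using (hhg i).symm
  refine ⟨(⟨c, hcN⟩, fun i => ⟨_, hvN i⟩), eq_of_le_of_sup_eq_top_of_inf_le (N := N) ?_ ?_ ?_⟩
  · refine (closure_le H).mpr ?_
    rintro x (rfl | ⟨i, rfl⟩)
    · exact (hc ▸ mem_zpowers x : x ∈ H ⊓ N).1
    · simpa using hhH i
  · rw [sup_eq_top_iff_map_mk'_eq_top, closureOfLifts, MonoidHom.map_closure, eq_top_iff, ← hg]
    refine closure_mono ?_
    rintro _ ⟨i, rfl⟩
    exact ⟨h i, Or.inr ⟨i, by simp⟩, hhg i⟩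
  · rw [← hc, zpowers_le]
    exact subset_closure (Set.mem_insert _ _)

end Subgroup

/-- If `C` is a cyclic normal subgroup of a finite group `G` such that `G / C` can be
generated by `k` elements, then the number of supplements of `C` in `G` (subgroups `H`
with `H ⊔ C = G`) is at most `|C| ^ (k + 1)`. -/
theorem card_supplements_le
    (G : Type) [Group G] [Fintype G] (C : Subgroup G) [C.Normal]
    (hcyc : IsCyclic C) (k : ℕ)
    (hgen : ∃ s : Finset (G ⧸ C), s.card ≤ k ∧
      Subgroup.closure (s : Set (G ⧸ C)) = ⊤) :
    Set.ncard {H : Subgroup G | H ⊔ C = ⊤} ≤ Nat.card C ^ (k + 1) := by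
  obtain ⟨s, hsk, hs⟩ := hgen
  set encode := Subgroup.closureOfLifts C ((↑) : s → G ⧸ C)
  have hsub : {H : Subgroup G | H ⊔ C = ⊤} ⊆ Set.range encode :=
    fun H hH => Subgroup.exists_closureOfLifts_eq (by rwa [Subtype.range_coe]) hH
  calc Set.ncard {H : Subgroup G | H ⊔ C = ⊤}
      ≤ (Set.range encode).ncard := Set.ncard_le_ncard hsub (Set.finite_range _)
    _ = Nat.card (Set.range encode) := (Nat.card_coe_set_eq _).symm
    _ ≤ Nat.card (C × (s → C)) := Finite.card_range_le _
    _ = Nat.card C ^ s.card * Nat.card C := by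
        rw [Nat.card_prod, Nat.card_fun, Nat.card_eq_finsetCard, mul_comm]
    _ ≤ Nat.card C ^ (k + 1) := by
        rw [pow_succ]
        exact Nat.mul_le_mul_right _ (Nat.pow_le_pow_right Nat.card_pos hsk)
end

section
/- Let G be a finite group. If there exist three pairwise distinct primes p, q, r dividing |G| such that G contains no element of order pq, no element of order pr, and no element of order qr, then G is not solvable. -/
/-!
Pass to a Hall `{p, q, r}`-subgroup `H` (Hall's theorem, by induction from Schur–Zassenhaus).
Being solvable, `H` has a nontrivial normal elementary abelian `a`-subgroup `V` for one of the
three primes `a`, and a Hall subgroup for the other two primes `b`, `c` contains, for the same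
reason, a noncyclic subgroup `⟨m⟩ ⋊ ⟨y⟩` of order `bc` or `b²`. As `H` has no elements of
order `ab` or `ac`, its elements of order `b` and `c` act on `V` by conjugation without nontrivial
fixed points. The norm `∏ z ^ j • v` of such an element `z` is then trivial, and multiplying these
norms over the `b + 1` cyclic subgroups `⟨m⟩`, `⟨m ^ i * y⟩` that cover `⟨m⟩ ⋊ ⟨y⟩` shows
`v ^ b = 1` for all `v ∈ V`, which contradicts `V ≠ ⊥`.
-/

open Finset Subgroup

variable {G : Type*} [Group G]

namespace Subgroup

structure IsElementaryAbelian (p : ℕ) (N : Subgroup G) : Prop where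
  isMulCommutative : IsMulCommutative N
  pow_eq_one : ∀ x ∈ N, x ^ p = 1

def torsionBy (A : Subgroup G) [IsMulCommutative A] (n : ℕ) : Subgroup G where
  carrier := {x | x ∈ A ∧ x ^ n = 1}
  mul_mem' := by
    rintro x y ⟨hx, hxn⟩ ⟨hy, hyn⟩
    exact ⟨A.mul_mem hx hy, by rw [Commute.mul_pow (setLike_mul_comm hx hy), hxn, hyn, one_mul]⟩
  one_mem' := ⟨A.one_mem, one_pow n⟩
  inv_mem' := fun ⟨hx, hxn⟩ => ⟨A.inv_mem hx, by rw [inv_pow, hxn, inv_one]⟩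

instance torsionBy_normal (A : Subgroup G) [A.Normal] [IsMulCommutative A] (n : ℕ) :
    (A.torsionBy n).Normal :=
  ⟨fun x ⟨hx, hxn⟩ g =>
    ⟨Normal.conj_mem ‹_› x hx g, by rw [conj_pow, hxn, mul_one, mul_inv_cancel]⟩⟩

theorem isElementaryAbelian_torsionBy (A : Subgroup G) [IsMulCommutative A] (n : ℕ) :
    (A.torsionBy n).IsElementaryAbelian n where
  isMulCommutative :=
    IsMulCommutative.of_setLike_mul_comm fun _ hx _ hy => setLike_mul_comm hx.1 hy.1
  pow_eq_one _ hx := hx.2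

theorem IsElementaryAbelian.primeFactors_card [Finite G] {p : ℕ} {N : Subgroup G}
    (hN : N.IsElementaryAbelian p) (hp : p.Prime) (hN1 : N ≠ ⊥) :
    (Nat.card N).primeFactors = {p} := by
  have : Fact p.Prime := ⟨hp⟩
  have hNp : IsPGroup p N := fun g => ⟨1, Subtype.ext (by simp [hN.pow_eq_one g g.2])⟩
  obtain ⟨k, hk, hcard⟩ := hNp.nontrivial_iff_card.mp ((nontrivial_iff_ne_bot N).mpr hN1)
  rw [hcard, Nat.primeFactors_prime_pow hk.ne' hp]

structure IsHall (π : Set ℕ) (H : Subgroup G) : Prop where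
  primeFactors_card : ∀ p ∈ (Nat.card H).primeFactors, p ∈ π
  primeFactors_index : ∀ p ∈ H.index.primeFactors, p ∉ π

variable {π : Set ℕ} {H : Subgroup G}

theorem IsHall.prime_dvd_card [Finite G] (hH : H.IsHall π) {p : ℕ} (hp : p.Prime) (hpπ : p ∈ π)
    (hpG : p ∣ Nat.card G) : p ∣ Nat.card H := by
  rw [← card_mul_index H] at hpG
  refine (hp.dvd_mul.mp hpG).resolve_right fun h => hH.primeFactors_index p ?_ hpπ
  exact Nat.mem_primeFactors.mpr ⟨hp, h, index_ne_zero_of_finite⟩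

theorem IsHall.primeFactors_card_eq [Finite G] {π : Finset ℕ} (hH : H.IsHall π) :
    (Nat.card H).primeFactors = (Nat.card G).primeFactors ∩ π := by
  ext p
  rw [mem_inter, Nat.mem_primeFactors_of_ne_zero Nat.card_pos.ne',
    Nat.mem_primeFactors_of_ne_zero Nat.card_pos.ne']
  refine ⟨fun ⟨hp, hpH⟩ => ⟨⟨hp, hpH.trans (card_subgroup_dvd_card H)⟩, ?_⟩,
    fun ⟨⟨hp, hpG⟩, hpπ⟩ => ⟨hp, hH.prime_dvd_card hp hpπ hpG⟩⟩
  exact hH.primeFactors_card p ((Nat.mem_primeFactors_of_ne_zero Nat.card_pos.ne').mpr ⟨hp, hpH⟩)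

theorem IsHall.comap_mk' [Finite G] {N : Subgroup G} [N.Normal] {K : Subgroup (G ⧸ N)}
    (hK : K.IsHall π) (hN : ∀ p ∈ (Nat.card N).primeFactors, p ∈ π) :
    (K.comap (QuotientGroup.mk' N)).IsHall π where
  primeFactors_card p hp := by
    rw [show Nat.card (K.comap (QuotientGroup.mk' N)) = Nat.card N * Nat.card K from
      QuotientGroup.card_preimage_mk N K, Nat.primeFactors_mul Nat.card_pos.ne' Nat.card_pos.ne',
      mem_union] at hp
    exact hp.elim (hN p) (hK.primeFactors_card p)
  primeFactors_index := by
    rw [index_comap_of_surjective K (QuotientGroup.mk'_surjective N)]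
    exact hK.primeFactors_index

theorem IsHall.map_subtype [Finite G] {L : Subgroup G} {K : Subgroup L} (hK : K.IsHall π)
    (hL : ∀ p ∈ L.index.primeFactors, p ∉ π) : (K.map L.subtype).IsHall π where
  primeFactors_card := by
    rw [Nat.card_congr (equivMapOfInjective K L.subtype L.subtype_injective).toEquiv.symm]
    exact hK.primeFactors_card
  primeFactors_index p hp := by
    rw [index_map_subtype, Nat.primeFactors_mul index_ne_zero_of_finite index_ne_zero_of_finite,
      mem_union] at hp
    exact hp.elim (hK.primeFactors_index p) (hL p)

theorem exists_isHall_of_normal [Finite G] {N : Subgroup G} [N.Normal]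
    (hN : ∀ p ∈ (Nat.card N).primeFactors, p ∉ π) (hGN : ∀ p ∈ N.index.primeFactors, p ∈ π) :
    ∃ K : Subgroup G, K.IsHall π := by
  have hcop : (Nat.card N).Coprime N.index :=
    Nat.coprime_of_dvd fun p hp hpN hpi =>
      hN p (Nat.mem_primeFactors.mpr ⟨hp, hpN, Nat.card_pos.ne'⟩)
        (hGN p (Nat.mem_primeFactors.mpr ⟨hp, hpi, index_ne_zero_of_finite⟩))
  obtain ⟨K, hK⟩ := exists_right_complement'_of_coprime hcop
  have hKN : Nat.card K = N.index := by
    have := hK.card_mul_card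
    rw [← card_mul_index N] at this
    exact Nat.eq_of_mul_eq_mul_left Nat.card_pos this
  have hNK : K.index = Nat.card N := by
    have := hK.card_mul_card
    rw [← card_mul_index K, mul_comm, eq_comm] at this
    exact Nat.eq_of_mul_eq_mul_left Nat.card_pos this
  exact ⟨K, ⟨hKN ▸ hGN, hNK ▸ hN⟩⟩

end Subgroup

theorem exists_normal_ne_bot_isMulCommutative [Group.IsSolvable G] [Nontrivial G] :
    ∃ A : Subgroup G, A.Normal ∧ A ≠ ⊥ ∧ IsMulCommutative A := by
  obtain ⟨n, hn⟩ := (Group.isSolvable_def G).mp ‹_›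
  obtain ⟨k, hk, hk1⟩ : ∃ k, derivedSeries G k ≠ ⊥ ∧ derivedSeries G (k + 1) = ⊥ := by
    by_contra! h
    exact Nat.rec (by simp) (fun k ih => h k ih) n hn
  exact ⟨_, derivedSeries_normal G k, hk,
    commutator_self_eq_bot_iff.mp (derivedSeries_succ G k ▸ hk1)⟩

theorem exists_normal_ne_bot_isElementaryAbelian [Finite G] [Group.IsSolvable G] [Nontrivial G] :
    ∃ p, p.Prime ∧ ∃ N : Subgroup G, N.Normal ∧ N ≠ ⊥ ∧ N.IsElementaryAbelian p := by
  obtain ⟨A, hAn, hA, hAc⟩ := exists_normal_ne_bot_isMulCommutative (G := G)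
  set p := (Nat.card A).minFac
  have hp : p.Prime := Nat.minFac_prime ((one_lt_card_iff_ne_bot A).mpr hA).ne'
  have : Fact p.Prime := ⟨hp⟩
  obtain ⟨x, hx⟩ := exists_prime_orderOf_dvd_card' (G := A) p (Nat.minFac_dvd _)
  refine ⟨p, hp, A.torsionBy p, inferInstance, fun h => ?_, isElementaryAbelian_torsionBy A p⟩
  have hxN : (x : G) ∈ A.torsionBy p := ⟨x.2, by rw [← hx, ← orderOf_coe, pow_orderOf_eq_one]⟩
  rw [h, mem_bot] at hxN
  exact hp.one_lt.ne' (by rw [← hx, ← orderOf_coe, hxN, orderOf_one])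

theorem exists_isHall [Finite G] [Group.IsSolvable G] (π : Set ℕ) :
    ∃ H : Subgroup G, H.IsHall π := by
  induction hn : Nat.card G using Nat.strong_induction_on generalizing G with
  | _ n ih =>
  rcases subsingleton_or_nontrivial G with hG | hG
  · refine ⟨⊤, fun p hp => ?_, fun p hp => ?_⟩ <;> simp at hp
  obtain ⟨p, hp, N, hNn, hN, hNab⟩ := exists_normal_ne_bot_isElementaryAbelian (G := G)
  have hNp := hNab.primeFactors_card hp hN
  have hQ : Nat.card (G ⧸ N) < n := by
    rw [← hn, ← card_mul_index N, index_eq_card]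
    exact lt_mul_left Nat.card_pos ((one_lt_card_iff_ne_bot N).mpr hN)
  obtain ⟨K, hK⟩ := ih _ hQ rfl
  by_cases hpπ : p ∈ π
  · exact ⟨_, hK.comap_mk' (by simpa [hNp] using hpπ)⟩
  have hN' : ∀ q ∈ (Nat.card N).primeFactors, q ∉ π := by simpa [hNp] using hpπ
  set L := K.comap (QuotientGroup.mk' N)
  have hLK : L.index = K.index := index_comap_of_surjective K (QuotientGroup.mk'_surjective N)
  by_cases hL : L = ⊤
  · rw [index_eq_one.mpr hL, eq_comm, index_eq_one] at hLK
    subst hLK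
    exact exists_isHall_of_normal hN' (by simpa [index_eq_card] using hK.primeFactors_card)
  have hLn : Nat.card L < n := by
    rw [← hn, ← card_mul_index L]
    exact lt_mul_right Nat.card_pos (one_lt_index_of_ne_top hL)
  obtain ⟨M, hM⟩ := ih _ hLn rfl
  exact ⟨_, hM.map_subtype (hLK ▸ hK.primeFactors_index)⟩

/-- Defined on all of `ℕ`; only its restriction to primes is ever used. -/
def gruenbergKegelGraph (G : Type*) [Group G] : SimpleGraph ℕ where
  Adj p q := p ≠ q ∧ ∃ g : G, orderOf g = p * q
  symm := ⟨fun _ _ ⟨hne, g, hg⟩ => ⟨hne.symm, g, by rw [hg, mul_comm]⟩⟩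
  loopless := ⟨fun _ h => h.1 rfl⟩

theorem gruenbergKegelGraph_adj {p q : ℕ} :
    (gruenbergKegelGraph G).Adj p q ↔ p ≠ q ∧ ∃ g : G, orderOf g = p * q :=
  Iff.rfl

theorem gruenbergKegelGraph_subgroup_le (K : Subgroup G) :
    gruenbergKegelGraph K ≤ gruenbergKegelGraph G :=
  fun _ _ ⟨hne, g, hg⟩ => gruenbergKegelGraph_adj.mpr ⟨hne, g, by rw [orderOf_coe, hg]⟩

theorem eq_one_of_commute_of_not_adj {a : ℕ} (ha : a.Prime) {v g : G} (hv : v ^ a = 1)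
    (hg : (orderOf g).Prime) (hag : a ≠ orderOf g)
    (hadj : ¬(gruenbergKegelGraph G).Adj a (orderOf g)) (hvg : Commute v g) : v = 1 := by
  by_contra hv1
  have : Fact a.Prime := ⟨ha⟩
  have hva : orderOf v = a := orderOf_eq_prime hv hv1
  refine hadj (gruenbergKegelGraph_adj.mpr ⟨hag, v * g, ?_⟩)
  rw [hvg.orderOf_mul_eq_mul_orderOf_of_coprime (hva ▸ (Nat.coprime_primes ha hg).mpr hag), hva]

theorem orderOf_mem_primeFactors_card [Finite G] {g : G} (hg : (orderOf g).Prime) :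
    orderOf g ∈ (Nat.card G).primeFactors :=
  Nat.mem_primeFactors.mpr ⟨hg, orderOf_dvd_natCard g, Nat.card_pos.ne'⟩

theorem geom_sum_eq_zero_of_pow_eq_one {b c : ℕ} [Fact b.Prime] {σ : ZMod b} (hσ : σ ^ c = 1)
    (h : c = b ∨ σ ≠ 1) : ∑ t ∈ range c, σ ^ t = 0 := by
  rcases h with rfl | h
  · rw [ZMod.pow_card] at hσ
    simp [hσ]
  · exact (mul_eq_zero.mp (by rw [geom_sum_mul, hσ, sub_self])).resolve_right (sub_ne_zero.mpr h)

theorem geom_sum_ne_zero_of_lt {b c : ℕ} [Fact b.Prime] (hc : c.Prime) {σ : ZMod b}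
    (hσ : σ ^ c = 1) (h : c = b ∨ σ ≠ 1) {j : ℕ} (hj : j ∈ Ico 1 c) : ∑ t ∈ range j, σ ^ t ≠ 0 := by
  obtain ⟨hj1, hjc⟩ := mem_Ico.mp hj
  rcases h with rfl | h
  · rw [ZMod.pow_card] at hσ
    simpa [hσ, ZMod.natCast_eq_zero_iff] using Nat.not_dvd_of_pos_of_lt hj1 hjc
  · intro h0
    have hσj : σ ^ j = 1 := by rw [← sub_eq_zero, ← geom_sum_mul, h0, zero_mul]
    rcases (Nat.dvd_prime hc).mp (orderOf_dvd_of_pow_eq_one hσ) with h1 | h1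
    · exact h (orderOf_eq_one_iff.mp h1)
    · exact hjc.not_ge (Nat.le_of_dvd hj1 (h1 ▸ orderOf_dvd_of_pow_eq_one hσj))

section NoncyclicPair

variable {F : Type*} [Group F]

theorem semiconjBy_pow_pow {m y : F} {s : ℕ} (h : SemiconjBy y m (m ^ s)) (i j : ℕ) :
    SemiconjBy (y ^ j) (m ^ i) (m ^ (i * s ^ j)) := by
  induction j with
  | zero => simp
  | succ j ih =>
    have hy := h.pow_right (i * s ^ j)
    rw [← pow_mul, show s * (i * s ^ j) = i * s ^ (j + 1) by ring] at hy
    rw [pow_succ']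
    exact hy.mul_left ih

theorem mul_pow_of_semiconjBy {m y : F} {s : ℕ} (h : SemiconjBy y m (m ^ s)) (i j : ℕ) :
    (m ^ i * y) ^ j = m ^ (i * ∑ t ∈ range j, s ^ t) * y ^ j := by
  induction j with
  | zero => simp
  | succ j ih =>
    rw [pow_succ, ih, mul_assoc, ← mul_assoc (y ^ j), (semiconjBy_pow_pow h i j).eq, mul_assoc,
      ← pow_succ, ← mul_assoc, ← pow_add, sum_range_succ, mul_add]

theorem pow_val_natCast {m : F} {b : ℕ} (hm : orderOf m = b) (k : ℕ) :
    m ^ (k : ZMod b).val = m ^ k := by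
  rw [ZMod.val_natCast, ← hm, pow_mod_orderOf]

/-- `⟨m⟩ ⋊ ⟨y⟩` is a noncyclic group of order `orderOf m * orderOf y`, both orders prime. -/
structure IsNoncyclicPair (m y : F) : Prop where
  prime_orderOf_left : (orderOf m).Prime
  prime_orderOf_right : (orderOf y).Prime
  notMem_zpowers : y ∉ zpowers m
  conj_mem_zpowers : y * m * y⁻¹ ∈ zpowers m
  noncyclic : orderOf y = orderOf m ∨ ¬Commute m y

theorem IsNoncyclicPair.map {H : Type*} [Group H] {f : F →* H} (hf : Function.Injective f)
    {m y : F} (h : IsNoncyclicPair m y) : IsNoncyclicPair (f m) (f y) where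
  prime_orderOf_left := orderOf_injective f hf m ▸ h.prime_orderOf_left
  prime_orderOf_right := orderOf_injective f hf y ▸ h.prime_orderOf_right
  notMem_zpowers := by
    rw [← MonoidHom.map_zpowers, mem_map_iff_mem hf]
    exact h.notMem_zpowers
  conj_mem_zpowers := by
    rw [← map_inv, ← map_mul, ← map_mul, ← MonoidHom.map_zpowers, mem_map_iff_mem hf]
    exact h.conj_mem_zpowers
  noncyclic := by
    rw [orderOf_injective f hf, orderOf_injective f hf, commute_iff_eq, ← map_mul, ← map_mul,
      hf.eq_iff]
    exact h.noncyclic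

theorem IsNoncyclicPair.exists_semiconjBy {m y : F} (h : IsNoncyclicPair m y) :
    ∃ s : ℕ, SemiconjBy y m (m ^ s) ∧ (s : ZMod (orderOf m)) ^ orderOf y = 1 ∧
      (orderOf y = orderOf m ∨ (s : ZMod (orderOf m)) ≠ 1) := by
  have hfin : IsOfFinOrder m := orderOf_pos_iff.mp h.prime_orderOf_left.pos
  obtain ⟨s, hs⟩ : ∃ s : ℕ, m ^ s = y * m * y⁻¹ :=
    hfin.mem_powers_iff_mem_zpowers.mpr h.conj_mem_zpowers
  have hsc : SemiconjBy y m (m ^ s) := by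
    rw [SemiconjBy, hs, inv_mul_cancel_right]
  refine ⟨s, hsc, ?_, h.noncyclic.imp_right fun hcomm hs1 => hcomm ?_⟩
  · have := (semiconjBy_pow_pow hsc 1 (orderOf y)).eq
    rw [pow_orderOf_eq_one, one_mul, one_mul, mul_one, pow_eq_pow_iff_modEq] at this
    exact_mod_cast (ZMod.natCast_eq_natCast_iff _ _ _).mpr this.symm
  · have : m ^ s = m ^ 1 := pow_eq_pow_iff_modEq.mpr
      ((ZMod.natCast_eq_natCast_iff _ _ _).mp (by exact_mod_cast hs1))
    rw [pow_one] at this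
    exact (this ▸ hsc).eq.symm

theorem Subgroup.IsElementaryAbelian.isNoncyclicPair {E : Subgroup F} {p : ℕ} [Fact p.Prime]
    (hE : E.IsElementaryAbelian p) {x y : F} (hx : x ∈ E) (hx1 : x ≠ 1) (hy : y ∈ E)
    (hyx : y ∉ zpowers x) : IsNoncyclicPair x y := by
  have hxp : orderOf x = p := orderOf_eq_prime (hE.pow_eq_one x hx) hx1
  have hyp : orderOf y = p := orderOf_eq_prime (hE.pow_eq_one y hy) fun h => hyx (h ▸ one_mem _)
  have := hE.isMulCommutative
  refine ⟨hxp ▸ Fact.out, hyp ▸ Fact.out, hyx, ?_, .inl (hyp.trans hxp.symm)⟩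
  rw [(setLike_mul_comm hy hx : y * x = x * y), mul_inv_cancel_right]
  exact mem_zpowers x

theorem isNoncyclicPair_of_conj_mem_zpowers {x y : F} (hx : (orderOf x).Prime)
    (hy : (orderOf y).Prime) (hxy : orderOf x ≠ orderOf y) (hconj : y * x * y⁻¹ ∈ zpowers x)
    (hadj : ¬(gruenbergKegelGraph F).Adj (orderOf x) (orderOf y)) : IsNoncyclicPair x y where
  prime_orderOf_left := hx
  prime_orderOf_right := hy
  notMem_zpowers h :=
    hxy ((Nat.prime_dvd_prime_iff_eq hy hx).mp (orderOf_dvd_of_mem_zpowers h)).symm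
  conj_mem_zpowers := hconj
  noncyclic := .inr fun hcomm => hadj <| gruenbergKegelGraph_adj.mpr ⟨hxy, x * y,
    hcomm.orderOf_mul_eq_mul_orderOf_of_coprime ((Nat.coprime_primes hx hy).mpr hxy)⟩

end NoncyclicPair

section FixedPointFree

variable {F V : Type*} [Group F] [CommGroup V] [MulDistribMulAction F V]

theorem prod_range_pow_smul_eq_one {z : F} {n : ℕ} (hz : z ^ n = 1)
    (hfix : ∀ v : V, z • v = v → v = 1) (v : V) : ∏ j ∈ range n, z ^ j • v = 1 := by
  refine hfix _ (mul_right_cancel (b := v) ?_)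
  have h1 := prod_range_succ' (fun j => z ^ j • v) n
  have h2 := prod_range_succ (fun j => z ^ j • v) n
  rw [pow_zero, one_smul] at h1
  rw [hz, one_smul] at h2
  rw [Finset.smul_prod', ← h2, h1]
  simp_rw [smul_smul, ← pow_succ']

theorem prod_zmod_pow_val_mul_smul_eq_one {m : F} {b : ℕ} [NeZero b] (hm : orderOf m = b)
    (hfix : ∀ v : V, m • v = v → v = 1) (g : F) (v : V) :
    ∏ i : ZMod b, (m ^ i.val * g) • v = 1 := by
  refine hfix _ ?_
  rw [Finset.smul_prod']
  refine Fintype.prod_equiv (Equiv.addRight 1) _ _ fun i => ?_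
  rw [smul_smul, ← mul_assoc, ← pow_succ', Equiv.coe_addRight, ← pow_val_natCast hm (i.val + 1)]
  simp

theorem pow_eq_one_of_forall_smul_eq_self {m y : F} {b c s : ℕ} [Fact b.Prime]
    (hm : orderOf m = b) (hmy : SemiconjBy y m (m ^ s)) (hc : 0 < c)
    (hz : ∀ i, (m ^ i * y) ^ c = 1) (he : ∀ j ∈ Ico 1 c, ∑ t ∈ range j, (s : ZMod b) ^ t ≠ 0)
    (hfix_m : ∀ v : V, m • v = v → v = 1) (hfix : ∀ i, ∀ v : V, (m ^ i * y) • v = v → v = 1)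
    (v : V) : v ^ b = 1 := by
  have hrow : ∀ i : ZMod b, ∏ j ∈ Ico 1 c, (m ^ i.val * y) ^ j • v = v⁻¹ := by
    intro i
    have := prod_range_pow_smul_eq_one (hz i.val) (hfix i.val) v
    rw [range_eq_Ico, prod_eq_prod_Ico_succ_bot hc, pow_zero, one_smul] at this
    exact eq_inv_of_mul_eq_one_right this
  -- `i ↦ i * (1 + s + ⋯ + s ^ (j - 1))` turns `m ^ i * y ^ j` into `(m ^ i * y) ^ j`
  have hcol : ∀ j ∈ Ico 1 c, ∏ i : ZMod b, (m ^ i.val * y) ^ j • v = 1 := by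
    intro j hj
    rw [← prod_zmod_pow_val_mul_smul_eq_one hm hfix_m (y ^ j) v]
    refine Fintype.prod_equiv (Equiv.mulRight₀ _ (he j hj)) _ _ fun i => ?_
    rw [mul_pow_of_semiconjBy hmy, ← pow_val_natCast hm (i.val * _)]
    push_cast [ZMod.natCast_val, ZMod.cast_id]
    rfl
  calc v ^ b = (∏ i : ZMod b, ∏ j ∈ Ico 1 c, (m ^ i.val * y) ^ j • v)⁻¹ := by
        simp [hrow, ZMod.card]
    _ = 1 := by rw [prod_comm, prod_eq_one hcol, inv_one]

end FixedPointFree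

open scoped IsMulCommutative in
theorem Subgroup.IsElementaryAbelian.eq_bot_of_isNoncyclicPair {V : Subgroup G} [V.Normal]
    {a : ℕ} (hV : V.IsElementaryAbelian a) (ha : a.Prime) {m y : G} (hmy : IsNoncyclicPair m y)
    (ham : a ≠ orderOf m) (hay : a ≠ orderOf y)
    (hm : ¬(gruenbergKegelGraph G).Adj a (orderOf m))
    (hy : ¬(gruenbergKegelGraph G).Adj a (orderOf y)) : V = ⊥ := by
  have := hV.isMulCommutative
  let : MulDistribMulAction G V := MulDistribMulAction.compHom V (MulAut.conjNormal (H := V))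
  have hfix : ∀ g : G, orderOf g = orderOf m ∨ orderOf g = orderOf y →
      ∀ v : V, g • v = v → v = 1 := by
    rintro g hg v hv
    have hconj : g * v * g⁻¹ = v := congrArg Subtype.val hv
    refine Subtype.ext (eq_one_of_commute_of_not_adj ha (hV.pow_eq_one v v.2) ?_ ?_ ?_
      (mul_inv_eq_iff_eq_mul.mp hconj).symm)
    · exact hg.elim (· ▸ hmy.prime_orderOf_left) (· ▸ hmy.prime_orderOf_right)
    · exact hg.elim (· ▸ ham) (· ▸ hay)
    · exact hg.elim (· ▸ hm) (· ▸ hy)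
  obtain ⟨s, hs, hσc, hσ⟩ := hmy.exists_semiconjBy
  have : Fact (orderOf m).Prime := ⟨hmy.prime_orderOf_left⟩
  have : Fact (orderOf y).Prime := ⟨hmy.prime_orderOf_right⟩
  have hz : ∀ i, (m ^ i * y) ^ orderOf y = 1 := by
    intro i
    rw [mul_pow_of_semiconjBy hs, pow_orderOf_eq_one, mul_one, ← orderOf_dvd_iff_pow_eq_one]
    refine Dvd.dvd.mul_left ((ZMod.natCast_eq_zero_iff _ _).mp ?_) i
    exact_mod_cast geom_sum_eq_zero_of_pow_eq_one hσc hσ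
  have hz1 : ∀ i, m ^ i * y ≠ 1 := fun i h => hmy.notMem_zpowers <| by
    rw [eq_inv_of_mul_eq_one_right h]
    exact inv_mem (pow_mem (mem_zpowers m) i)
  refine (eq_bot_iff_forall V).mpr fun v hv => ?_
  have hb := pow_eq_one_of_forall_smul_eq_self rfl hs hmy.prime_orderOf_right.pos hz
    (fun j hj => geom_sum_ne_zero_of_lt hmy.prime_orderOf_right hσc hσ hj) (hfix m (.inl rfl))
    (fun i => hfix _ (.inr (orderOf_eq_prime (hz i) (hz1 i)))) ⟨v, hv⟩
  have hcop : a.gcd (orderOf m) = 1 := (Nat.coprime_primes ha hmy.prime_orderOf_left).mpr ham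
  simpa [hcop] using pow_gcd_eq_one.mpr ⟨hV.pow_eq_one v hv, congrArg Subtype.val hb⟩

theorem exists_isNoncyclicPair [Finite G] [Group.IsSolvable G]
    (hG : 1 < #(Nat.card G).primeFactors)
    (hind : (gruenbergKegelGraph G).IsIndepSet (Nat.card G).primeFactors) :
    ∃ m y : G, IsNoncyclicPair m y := by
  have : Nontrivial G := Finite.one_lt_card_iff_nontrivial.mp <|
    lt_of_le_of_ne Nat.card_pos fun h => by simp [← h] at hG
  obtain ⟨u, hu, E, hEn, hE, hEab⟩ := exists_normal_ne_bot_isElementaryAbelian (G := G)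
  have : Fact u.Prime := ⟨hu⟩
  obtain ⟨⟨x, hxE⟩, hx1⟩ := (ne_bot_iff_exists_ne_one).mp hE
  replace hx1 : x ≠ 1 := fun h => hx1 (Subtype.ext h)
  have hxu : orderOf x = u := orderOf_eq_prime (hEab.pow_eq_one x hxE) hx1
  by_cases hEx : E ≤ zpowers x
  · have huG : u ∈ (Nat.card G).primeFactors := hxu ▸ orderOf_mem_primeFactors_card (hxu ▸ hu)
    obtain ⟨c, hcG, hcu⟩ := exists_mem_ne hG u
    have : Fact c.Prime := ⟨Nat.prime_of_mem_primeFactors hcG⟩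
    obtain ⟨y, hyc⟩ := exists_prime_orderOf_dvd_card' c (Nat.dvd_of_mem_primeFactors hcG)
    refine ⟨x, y, isNoncyclicPair_of_conj_mem_zpowers (hxu ▸ hu) (hyc ▸ Fact.out) ?_
      (hEx (hEn.conj_mem x hxE y)) ?_⟩ <;> rw [hxu, hyc]
    exacts [hcu.symm, hind huG hcG hcu.symm]
  · obtain ⟨z, hzE, hzx⟩ := SetLike.not_le_iff_exists.mp hEx
    exact ⟨x, z, hEab.isNoncyclicPair hxE hx1 hzE hzx⟩

theorem card_primeFactors_le_two_of_isIndepSet [Finite G] [Group.IsSolvable G]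
    (hind : (gruenbergKegelGraph G).IsIndepSet (Nat.card G).primeFactors) :
    #(Nat.card G).primeFactors ≤ 2 := by
  by_contra! h3
  have : Nontrivial G := Finite.one_lt_card_iff_nontrivial.mp <|
    lt_of_le_of_ne Nat.card_pos fun h => by simp [← h] at h3
  obtain ⟨a, ha, V, hVn, hV, hVab⟩ := exists_normal_ne_bot_isElementaryAbelian (G := G)
  have haG : a ∈ (Nat.card G).primeFactors :=
    Nat.primeFactors_mono (card_subgroup_dvd_card V) Nat.card_pos.ne'
      (by simp [hVab.primeFactors_card ha hV])
  obtain ⟨W, hW⟩ := exists_isHall (G := G) ↑((Nat.card G).primeFactors.erase a)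
  have hWG : (Nat.card W).primeFactors = (Nat.card G).primeFactors.erase a := by
    rw [hW.primeFactors_card_eq, inter_eq_right.mpr (erase_subset _ _)]
  obtain ⟨m, y, hmy⟩ := exists_isNoncyclicPair (G := W)
    (by rw [hWG, card_erase_of_mem haG]; omega)
    (hWG ▸ fun p hp q hq hpq hadj => hind (mem_of_mem_erase hp) (mem_of_mem_erase hq) hpq
      (gruenbergKegelGraph_subgroup_le W hadj))
  have hm := orderOf_mem_primeFactors_card hmy.prime_orderOf_left
  have hy := orderOf_mem_primeFactors_card hmy.prime_orderOf_right
  rw [hWG, ← orderOf_coe] at hm hy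
  refine hV (hVab.eq_bot_of_isNoncyclicPair ha (hmy.map W.subtype_injective)
    (ne_of_mem_erase hm).symm (ne_of_mem_erase hy).symm ?_ ?_)
  · exact hind haG (mem_of_mem_erase hm) (ne_of_mem_erase hm).symm
  · exact hind haG (mem_of_mem_erase hy) (ne_of_mem_erase hy).symm

theorem card_le_two_of_isIndepSet [Finite G] [Group.IsSolvable G] {π : Finset ℕ}
    (hind : (gruenbergKegelGraph G).IsIndepSet π) (hπ : π ⊆ (Nat.card G).primeFactors) :
    #π ≤ 2 := by
  obtain ⟨H, hH⟩ := exists_isHall (G := G) π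
  have hHπ : (Nat.card H).primeFactors = π := by
    rw [hH.primeFactors_card_eq, inter_eq_right.mpr hπ]
  rw [← hHπ]
  exact card_primeFactors_le_two_of_isIndepSet (hHπ ▸ fun p hp q hq hpq hadj =>
    hind hp hq hpq (gruenbergKegelGraph_subgroup_le H hadj))

/-- If the Gruenberg–Kegel graph of a finite group `G` contains a coclique of size 3
(three pairwise distinct primes dividing `|G|` such that `G` has no element of order
the product of any two of them), then `G` is not solvable. -/
theorem not_solvable_of_three_coclique
    (G : Type) [Group G] [Fintype G]
    (h : ∃ p q r : ℕ, p.Prime ∧ q.Prime ∧ r.Prime ∧ p ≠ q ∧ p ≠ r ∧ q ≠ r ∧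
      p ∣ Fintype.card G ∧ q ∣ Fintype.card G ∧ r ∣ Fintype.card G ∧
      (¬ ∃ g : G, orderOf g = p * q) ∧ (¬ ∃ g : G, orderOf g = p * r) ∧
      (¬ ∃ g : G, orderOf g = q * r)) :
    ¬ IsSolvable G := by
  intro hG
  have : Group.IsSolvable G := hG
  obtain ⟨p, q, r, hp, hq, hr, hpq, hpr, hqr, hpG, hqG, hrG, hnpq, hnpr, hnqr⟩ := h
  simp only [not_exists] at hnpq hnpr hnqr
  have hind : (gruenbergKegelGraph G).IsIndepSet ({p, q, r} : Finset ℕ) := by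
    simp [SimpleGraph.IsIndepSet, Set.pairwise_insert, gruenbergKegelGraph_adj, mul_comm, *]
  have hsub : {p, q, r} ⊆ (Nat.card G).primeFactors := by
    simp [insert_subset_iff, Nat.mem_primeFactors, *]
  have hle := card_le_two_of_isIndepSet hind hsub
  rw [card_insert_of_notMem (by simp [*]), card_pair hqr] at hle
  omega
end
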